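/- arXiv:2503.23940 — 2 statements merged into one kernel-verified Lean document; each statement's English description precedes it below -/
import Mathlib

section
/- Let B be a standard Brownian motion on [0,1] defined on a probability space (Ω, F, P): B_0 = 0 almost surely, for all 0 ≤ s < t ≤ 1 the increment B_t − B_s is Gaussian with mean 0 and variance t − s, increments over pairwise disjoint intervals are independent, and almost surely the path t ↦ B_t is continuous. Then for every sequence of partitions P_n of [0,1] with mesh ‖P_n‖ → 0, writing P_n : 0 = a_0^{(n)} < … < a_{l_n}^{(n)} = 1, the quadratic variation sums ∑_{j=1}^{l_n} (B_{a_j^{(n)}} − B_{a_{j-1}^{(n)}})² converge to 1 in probability as n → ∞. -/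
/-!
Over a partition `0 = a₀ < ⋯ < a_l = 1`, the squared increments `(B_{a_j} - B_{a_{j-1}})²` are
independent, with means `Δ_j = a_j - a_{j-1}` and, by Gaussian scaling, variances `c Δ_j²`, where
`c = Var(Z²) = 2` for a standard Gaussian `Z`. The quadratic variation sum therefore has mean
`∑ Δ_j = 1` and variance `c ∑ Δ_j² ≤ c ‖P‖`, and Chebyshev's inequality gives convergence to `1`
in probability as the mesh tends to `0`.
-/

open MeasureTheory ProbabilityTheory Filter Finset

/-- A partition of `[a,b]`: a finite increasing sequence `a = p 0 < p 1 < … < p l = b`. -/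
def IsPartition (a b : ℝ) (l : ℕ) (p : ℕ → ℝ) : Prop :=
  p 0 = a ∧ p l = b ∧ ∀ j, j < l → p j < p (j + 1)

open scoped NNReal Topology

namespace ProbabilityTheory

variable {Ω : Type*} [MeasurableSpace Ω] {P : Measure Ω}

lemma hasLaw_of_map_eq {𝓧 : Type*} [MeasurableSpace 𝓧] {X : Ω → 𝓧} {μ : Measure 𝓧} [NeZero μ]
    (h : P.map X = μ) : HasLaw X μ P :=
  ⟨aemeasurable_of_map_neZero (h ▸ ‹NeZero μ›), h⟩

variable {X : Ω → ℝ} {v : ℝ≥0}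

lemma memLp_sq_gaussianReal {μ : ℝ} : MemLp (fun x : ℝ => x ^ 2) 2 (gaussianReal μ v) := by
  rw [memLp_two_iff_integrable_sq (by fun_prop)]
  simpa [← pow_mul, Even.pow_abs (by decide : Even 4)] using
    (memLp_id_gaussianReal (μ := μ) (v := v) 4).integrable_norm_pow (by norm_num)

lemma variance_sq_gaussianReal (v : ℝ≥0) :
    Var[fun x : ℝ => x ^ 2; gaussianReal 0 v]
      = v ^ 2 * Var[fun x : ℝ => x ^ 2; gaussianReal 0 1] := by
  have hmap : (gaussianReal 0 1).map (√v * ·) = gaussianReal 0 v := by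
    rw [gaussianReal_map_const_mul]
    congr 1
    · simp
    · ext; simp
  rw [← hmap, variance_map (by fun_prop) (by fun_prop), ← variance_const_mul]
  congr 1 with x
  simp [mul_pow]

lemma HasLaw.integral_sq_gaussianReal (hX : HasLaw X (gaussianReal 0 v) P) :
    ∫ ω, X ω ^ 2 ∂P = v := by
  rw [← variance_fun_id_gaussianReal (μ := 0), variance_of_integral_eq_zero (by fun_prop) (by simp)]
  exact hX.integral_comp (f := fun x : ℝ => x ^ 2) (by fun_prop)

lemma HasLaw.memLp_sq_gaussianReal (hX : HasLaw X (gaussianReal 0 v) P) :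
    MemLp (fun ω => X ω ^ 2) 2 P := by
  have h : MemLp (fun x : ℝ => x ^ 2) 2 (P.map X) :=
    hX.map_eq ▸ ProbabilityTheory.memLp_sq_gaussianReal
  exact h.comp_of_map hX.aemeasurable

lemma HasLaw.variance_sq_gaussianReal (hX : HasLaw X (gaussianReal 0 v) P) :
    Var[fun ω => X ω ^ 2; P] = v ^ 2 * Var[fun x : ℝ => x ^ 2; gaussianReal 0 1] := by
  rw [← ProbabilityTheory.variance_sq_gaussianReal, ← hX.map_eq,
    variance_map (by fun_prop) hX.aemeasurable]
  rfl

section SumOfSquares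

variable {ι : Type*} [Fintype ι] {Y : ι → Ω → ℝ} {v : ι → ℝ≥0}

lemma integral_sum_sq_of_hasLaw_gaussianReal [IsFiniteMeasure P]
    (hY : ∀ i, HasLaw (Y i) (gaussianReal 0 (v i)) P) :
    ∫ ω, ∑ i, Y i ω ^ 2 ∂P = ∑ i, (v i : ℝ) := by
  rw [integral_finsetSum _ fun i _ => (hY i).memLp_sq_gaussianReal.integrable one_le_two]
  exact Finset.sum_congr rfl fun i _ => (hY i).integral_sq_gaussianReal

lemma memLp_sum_sq_of_hasLaw_gaussianReal (hY : ∀ i, HasLaw (Y i) (gaussianReal 0 (v i)) P) :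
    MemLp (fun ω => ∑ i, Y i ω ^ 2) 2 P :=
  memLp_finsetSum _ fun i _ => (hY i).memLp_sq_gaussianReal

lemma variance_sum_sq_of_iIndepFun_gaussianReal
    (hY : ∀ i, HasLaw (Y i) (gaussianReal 0 (v i)) P) (hind : iIndepFun Y P) :
    Var[fun ω => ∑ i, Y i ω ^ 2; P]
      = Var[fun x : ℝ => x ^ 2; gaussianReal 0 1] * ∑ i, (v i : ℝ) ^ 2 := by
  have hsq : iIndepFun (fun i ω => Y i ω ^ 2) P :=
    hind.comp (fun _ x => x ^ 2) fun _ => by fun_prop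
  have h := IndepFun.variance_sum (s := univ) (X := fun i ω => Y i ω ^ 2)
    (fun i _ => (hY i).memLp_sq_gaussianReal) fun i _ j _ hij => hsq.indepFun hij
  rw [Finset.sum_fn] at h
  rw [h, Finset.mul_sum]
  exact Finset.sum_congr rfl fun i _ => by rw [(hY i).variance_sq_gaussianReal, mul_comm]

end SumOfSquares

lemma tendstoInMeasure_const_of_tendsto_variance {ι : Type*} {l : Filter ι} [IsFiniteMeasure P]
    {f : ι → Ω → ℝ} {a : ℝ} (hf : ∀ i, MemLp (f i) 2 P) (hmean : ∀ i, P[f i] = a)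
    (hvar : Tendsto (fun i => Var[f i; P]) l (𝓝 0)) :
    TendstoInMeasure P f l (fun _ => a) := by
  rw [tendstoInMeasure_iff_dist]
  intro ε hε
  have hbound : Tendsto (fun i => ENNReal.ofReal (Var[f i; P] / ε ^ 2)) l (𝓝 0) := by
    simpa using ENNReal.tendsto_ofReal (hvar.div_const (ε ^ 2))
  refine tendsto_of_tendsto_of_tendsto_of_le_of_le tendsto_const_nhds hbound (fun _ => zero_le)
    fun i => ?_
  simpa [Real.dist_eq, hmean i] using meas_ge_le_variance_div_sq (hf i) hε

end ProbabilityTheory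

lemma tendsto_zero_of_forall_eventually_le_mul {ι : Type*} {l : Filter ι} {x : ι → ℝ} {C : ℝ}
    (hx : ∀ i, 0 ≤ x i) (h : ∀ δ > 0, ∀ᶠ i in l, x i ≤ C * δ) : Tendsto x l (𝓝 0) := by
  refine tendsto_order.2 ⟨fun a ha => Eventually.of_forall fun i => ha.trans_le (hx i),
    fun b hb => ?_⟩
  obtain ⟨δ, hδ, hCδ⟩ := exists_pos_mul_lt hb C
  filter_upwards [h δ hδ] with i hi using hi.trans_lt hCδ

namespace IsPartition

variable {a b : ℝ} {L : ℕ} {q : ℕ → ℝ}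

lemma strictMono_fin (hq : IsPartition a b L q) : StrictMono fun i : Fin (L + 1) => q i :=
  Fin.strictMono_iff_lt_succ.2 fun i => hq.2.2 i i.isLt

lemma mem_Icc (hq : IsPartition a b L q) (i : Fin (L + 1)) : q i ∈ Set.Icc a b := by
  constructor
  · simpa [hq.1] using hq.strictMono_fin.monotone (Fin.zero_le i)
  · simpa [hq.2.1] using hq.strictMono_fin.monotone (Fin.le_last i)

lemma coe_toNNReal_sub (hq : IsPartition a b L q) {j : ℕ} (hj : j < L) :
    (Real.toNNReal (q (j + 1) - q j) : ℝ) = q (j + 1) - q j :=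
  Real.coe_toNNReal _ (sub_nonneg.2 (hq.2.2 j hj).le)

lemma sum_sub (hq : IsPartition a b L q) : ∑ j ∈ range L, (q (j + 1) - q j) = b - a := by
  rw [Finset.sum_range_sub, hq.1, hq.2.1]

lemma sum_sq_sub_le (hq : IsPartition a b L q) {δ : ℝ} (hmesh : ∀ j < L, q (j + 1) - q j ≤ δ) :
    ∑ j ∈ range L, (q (j + 1) - q j) ^ 2 ≤ δ * (b - a) := by
  rw [← hq.sum_sub, Finset.mul_sum]
  refine Finset.sum_le_sum fun j hj => ?_
  rw [sq]
  exact mul_le_mul_of_nonneg_right (hmesh j (mem_range.1 hj))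
    (sub_nonneg.2 (hq.2.2 j (mem_range.1 hj)).le)

end IsPartition

section BrownianIncrements

variable {Ω : Type*} [MeasurableSpace Ω] (P : Measure Ω) (B : ℝ → Ω → ℝ)

def HasGaussianIncrements : Prop :=
  ∀ s t : ℝ, 0 ≤ s → s < t → t ≤ 1 →
    Measure.map (fun ω => B t ω - B s ω) P = gaussianReal 0 (Real.toNNReal (t - s))

def HasIndependentIncrements : Prop :=
  ∀ (N : ℕ) (t : Fin (N + 1) → ℝ), StrictMono t → (∀ i, 0 ≤ t i ∧ t i ≤ 1) →
    iIndepFun (fun (i : Fin N) ω => B (t i.succ) ω - B (t i.castSucc) ω) P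

variable {P B} {L : ℕ} {q : ℕ → ℝ}

lemma hasLaw_increment_of_isPartition
    (hgauss : HasGaussianIncrements P B) (hq : IsPartition 0 1 L q) (j : Fin L) :
    HasLaw (fun ω => B (q (j + 1)) ω - B (q j) ω)
      (gaussianReal 0 (Real.toNNReal (q (j + 1) - q j))) P :=
  hasLaw_of_map_eq <| hgauss _ _ (hq.mem_Icc j.castSucc).1 (hq.2.2 j j.isLt)
    (hq.mem_Icc j.succ).2

lemma memLp_sum_sq_increments
    (hgauss : HasGaussianIncrements P B) (hq : IsPartition 0 1 L q) :
    MemLp (fun ω => ∑ j ∈ range L, (B (q (j + 1)) ω - B (q j) ω) ^ 2) 2 P := by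
  simp_rw [Finset.sum_range]
  exact memLp_sum_sq_of_hasLaw_gaussianReal (hasLaw_increment_of_isPartition hgauss hq)

lemma integral_sum_sq_increments_eq_one [IsProbabilityMeasure P]
    (hgauss : HasGaussianIncrements P B) (hq : IsPartition 0 1 L q) :
    ∫ ω, ∑ j ∈ range L, (B (q (j + 1)) ω - B (q j) ω) ^ 2 ∂P = 1 := by
  simp_rw [Finset.sum_range]
  rw [integral_sum_sq_of_hasLaw_gaussianReal (hasLaw_increment_of_isPartition hgauss hq),
    ← Finset.sum_range (fun j => (Real.toNNReal (q (j + 1) - q j) : ℝ)),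
    Finset.sum_congr rfl fun j hj => hq.coe_toNNReal_sub (mem_range.1 hj), hq.sum_sub, sub_zero]

lemma variance_sum_sq_increments_le
    (hgauss : HasGaussianIncrements P B) (hindep : HasIndependentIncrements P B)
    (hq : IsPartition 0 1 L q) {δ : ℝ} (hmesh : ∀ j < L, q (j + 1) - q j ≤ δ) :
    Var[fun ω => ∑ j ∈ range L, (B (q (j + 1)) ω - B (q j) ω) ^ 2; P]
      ≤ Var[fun x : ℝ => x ^ 2; gaussianReal 0 1] * δ := by
  have hind : iIndepFun (fun (j : Fin L) ω => B (q (j + 1)) ω - B (q j) ω) P :=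
    hindep L (fun i => q i) hq.strictMono_fin hq.mem_Icc
  simp_rw [Finset.sum_range]
  rw [variance_sum_sq_of_iIndepFun_gaussianReal (hasLaw_increment_of_isPartition hgauss hq) hind,
    ← Finset.sum_range (fun j => (Real.toNNReal (q (j + 1) - q j) : ℝ) ^ 2),
    Finset.sum_congr rfl fun j hj => by rw [hq.coe_toNNReal_sub (mem_range.1 hj)]]
  calc _ ≤ Var[fun x : ℝ => x ^ 2; gaussianReal 0 1] * (δ * (1 - 0)) :=
        mul_le_mul_of_nonneg_left (hq.sum_sq_sub_le hmesh) (variance_nonneg _ _)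
    _ = _ := by ring

end BrownianIncrements

theorem brownian_quadratic_variation_tendsto_one_in_probability_general
    {Ω : Type*} [MeasurableSpace Ω] (P : Measure Ω) [IsProbabilityMeasure P]
    (B : ℝ → Ω → ℝ)
    (hgauss : ∀ s t : ℝ, 0 ≤ s → s < t → t ≤ 1 →
      Measure.map (fun ω => B t ω - B s ω) P = gaussianReal 0 (Real.toNNReal (t - s)))
    (hindep : ∀ (N : ℕ) (t : Fin (N + 1) → ℝ), StrictMono t →
      (∀ i, 0 ≤ t i ∧ t i ≤ 1) →
      iIndepFun
        (fun (i : Fin N) ω => B (t i.succ) ω - B (t i.castSucc) ω) P) :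
    ∀ (l : ℕ → ℕ) (p : ℕ → ℕ → ℝ),
      (∀ n, IsPartition 0 1 (l n) (p n)) →
      (∀ δ > (0 : ℝ), ∃ N : ℕ, ∀ n ≥ N, ∀ j, j < l n → p n (j + 1) - p n j < δ) →
      TendstoInMeasure P
        (fun n ω => ∑ j ∈ Finset.range (l n), (B (p n (j + 1)) ω - B (p n j) ω)^2)
        atTop (fun _ => 1) := by
  intro l p hpart hmesh
  refine tendstoInMeasure_const_of_tendsto_variance
    (fun n => memLp_sum_sq_increments hgauss (hpart n))
    (fun n => integral_sum_sq_increments_eq_one hgauss (hpart n)) ?_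
  refine tendsto_zero_of_forall_eventually_le_mul (C := Var[fun x : ℝ => x ^ 2; gaussianReal 0 1])
    (fun n => variance_nonneg _ _) fun δ hδ => ?_
  obtain ⟨N, hN⟩ := hmesh δ hδ
  filter_upwards [eventually_ge_atTop N] with n hn
  exact variance_sum_sq_increments_le hgauss hindep (hpart n) fun j hj => (hN n hn j hj).le

/-- Let `B` be a standard Brownian motion on `[0,1]`. For every sequence
of partitions of `[0,1]` whose mesh tends to `0`, the quadratic variation sums
`∑_j (B_{a_j} - B_{a_{j-1}})²` converge to `1` in probability. -/
theorem brownian_quadratic_variation_tendsto_one_in_probability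
    {Ω : Type*} [MeasurableSpace Ω] (P : Measure Ω) [IsProbabilityMeasure P]
    (B : ℝ → Ω → ℝ)
    (h0 : ∀ᵐ ω ∂P, B 0 ω = 0)
    (hgauss : ∀ s t : ℝ, 0 ≤ s → s < t → t ≤ 1 →
      Measure.map (fun ω => B t ω - B s ω) P = gaussianReal 0 (Real.toNNReal (t - s)))
    (hindep : ∀ (N : ℕ) (t : Fin (N + 1) → ℝ), StrictMono t →
      (∀ i, 0 ≤ t i ∧ t i ≤ 1) →
      iIndepFun
        (fun (i : Fin N) ω => B (t i.succ) ω - B (t i.castSucc) ω) P)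
    (hcont : ∀ᵐ ω ∂P, ContinuousOn (fun t => B t ω) (Set.Icc (0 : ℝ) 1)) :
    ∀ (l : ℕ → ℕ) (p : ℕ → ℕ → ℝ),
      (∀ n, IsPartition 0 1 (l n) (p n)) →
      (∀ δ > (0 : ℝ), ∃ N : ℕ, ∀ n ≥ N, ∀ j, j < l n → p n (j + 1) - p n j < δ) →
      TendstoInMeasure P
        (fun n ω => ∑ j ∈ Finset.range (l n), (B (p n (j + 1)) ω - B (p n j) ω)^2)
        atTop (fun _ => 1) :=
  brownian_quadratic_variation_tendsto_one_in_probability_general P B hgauss hindep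
end

section
/- Let a = [w_1, …, w_m] be a sentence of m words over an alphabet S such that none of the words is closed, every edge of G_a is traversed at least twice by the sentence, and for every i there exists j ≠ i such that w_i and w_j share an edge. If equality wt(a) = ∑_{i=1}^m l(w_i)/2 holds, then: (a) every edge of G_a is traversed exactly twice by the sentence; (b) m is even and G_a has exactly m/2 connected components, each of which is a tree; and (c) for every i there is a unique j ≠ i such that w_i and w_j share an edge, and each connected component of G_a contains the supports of exactly two of the words. -/
open Finset

/-- The list of (undirected) edges traversed by a word, i.e. the unordered pairs of
consecutive letters. -/
def wordSteps {S : Type*} (L : List S) : List (Sym2 S) :=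
  L.zipWith (fun a b => s(a, b)) L.tail

/-- The support of the sentence `a = [w_1,…,w_m]`: the set of letters appearing in it. -/
def sentenceSupp {S : Type*} [DecidableEq S] {m : ℕ} (w : Fin m → List S) : Finset S :=
  Finset.univ.biUnion fun i => (w i).toFinset

/-- The graph `G_a` of a sentence `a = [w_1,…,w_m]`, with vertex set `supp(a)` and edge
set the union of the edge sets of the graphs `G_{w_i}` of its words. -/
def sentenceGraph {S : Type*} [DecidableEq S] {m : ℕ} (w : Fin m → List S) :
    SimpleGraph {x : S // x ∈ sentenceSupp w} :=
  SimpleGraph.fromRel fun u v => ∃ i, s((u : S), (v : S)) ∈ wordSteps (w i)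

/-! Write `V`, `E`, `C` for the numbers of vertices, edges and components of `G_a`, and `N(e)`
for the number of traversals of a step `e` (a pair of consecutive letters, possibly a loop).
Then `2V = ∑ l(w_i) = m + ∑ N(e) ≥ m + 2 #steps ≥ m + 2E ≥ 2C + 2E ≥ 2V`: every step is
traversed at least twice, distinct edges are distinct steps, every component contains at least
two words (a word and a word sharing an edge with it lie in the same component), and
`V ≤ E + C` because each component has a spanning tree. So all these inequalities are
equalities: each step is traversed exactly twice, each component contains exactly two words, and
each component has one edge fewer than vertices, i.e. is a tree. -/

lemma Finset.card_filter_eq_of_card_le_mul_card {α β : Type*} [DecidableEq β] {f : α → β}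
    {s : Finset α} {t : Finset β} (Hf : ∀ a ∈ s, f a ∈ t) {n : ℕ}
    (hn : ∀ b ∈ t, n ≤ #{a ∈ s | f a = b}) (h : #s ≤ n * #t) :
    ∀ b ∈ t, #{a ∈ s | f a = b} = n := by
  refine fun b hb => ((Finset.sum_eq_sum_iff_of_le hn).mp (le_antisymm ?_ ?_) b hb).symm
  · exact Finset.sum_le_sum hn
  · rw [← Finset.card_eq_sum_card_fiberwise Hf, Finset.sum_const, smul_eq_mul, mul_comm]
    exact h

namespace SimpleGraph

variable {V : Type*} {G : SimpleGraph V}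

namespace ConnectedComponent

lemma sum_card_supp [Fintype G.ConnectedComponent] [Finite V] :
    ∑ c : G.ConnectedComponent, Nat.card c.supp = Nat.card V := by
  rw [← Nat.card_sigma]
  exact Nat.card_congr (Equiv.sigmaFiberEquiv G.connectedComponentMk)

lemma sum_card_edgeSet_toSimpleGraph [Fintype G.ConnectedComponent] [Finite V] :
    ∑ c : G.ConnectedComponent, Nat.card c.toSimpleGraph.edgeSet = Nat.card G.edgeSet := by
  rw [← Nat.card_sigma]
  refine Nat.card_eq_of_bijective (fun p => p.1.toSimpleGraph_hom.mapEdgeSet p.2) ⟨?_, ?_⟩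
  · rintro ⟨c, ⟨e, he⟩⟩ ⟨c', ⟨e', he'⟩⟩ h
    induction e using Sym2.ind with
    | _ u v => ?_
    have hu : u.1 ∈ c'.supp := by
      have hmem : u.1 ∈ (c'.toSimpleGraph_hom.mapEdgeSet ⟨e', he'⟩ : Sym2 V) :=
        congrArg Subtype.val h ▸ Sym2.mem_mk_left _ _
      obtain ⟨x, -, hx⟩ := Sym2.mem_map.mp hmem
      exact hx ▸ x.2
    obtain rfl := eq_of_common_vertex u.2 hu
    congr 1
    exact Hom.mapEdgeSet.injective _ Subtype.val_injective h
  · rintro ⟨e, he⟩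
    induction e using Sym2.ind with
    | _ u v => ?_
    have hu : u ∈ (G.connectedComponentMk u).supp := rfl
    exact ⟨⟨_, ⟨s(⟨u, hu⟩, ⟨v, mem_supp_of_adj_mem_supp _ hu he⟩), he⟩⟩, rfl⟩

lemma card_supp_le_card_edgeSet_toSimpleGraph_add_one (c : G.ConnectedComponent) :
    Nat.card c.supp ≤ Nat.card c.toSimpleGraph.edgeSet + 1 :=
  c.connected_toSimpleGraph.card_vert_le_card_edgeSet_add_one

end ConnectedComponent

variable [Finite V]

lemma sum_card_edgeSet_toSimpleGraph_add_one [Fintype G.ConnectedComponent] :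
    ∑ c : G.ConnectedComponent, (Nat.card c.toSimpleGraph.edgeSet + 1) =
      Nat.card G.edgeSet + Nat.card G.ConnectedComponent := by
  rw [Finset.sum_add_distrib, ConnectedComponent.sum_card_edgeSet_toSimpleGraph,
    Finset.sum_const, Finset.card_univ, smul_eq_mul, mul_one, Fintype.card_eq_nat_card]

lemma card_le_card_edgeSet_add_card_connectedComponent :
    Nat.card V ≤ Nat.card G.edgeSet + Nat.card G.ConnectedComponent := by
  have : Fintype G.ConnectedComponent := Fintype.ofFinite _
  rw [← ConnectedComponent.sum_card_supp (G := G), ← sum_card_edgeSet_toSimpleGraph_add_one]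
  exact Finset.sum_le_sum fun c _ => c.card_supp_le_card_edgeSet_toSimpleGraph_add_one

lemma isTree_toSimpleGraph_of_card_edgeSet_add_card_connectedComponent_le
    (h : Nat.card G.edgeSet + Nat.card G.ConnectedComponent ≤ Nat.card V)
    (c : G.ConnectedComponent) : c.toSimpleGraph.IsTree := by
  have : Fintype G.ConnectedComponent := Fintype.ofFinite _
  rw [← ConnectedComponent.sum_card_supp (G := G), ← sum_card_edgeSet_toSimpleGraph_add_one]
    at h
  have hle := fun (c : G.ConnectedComponent) (_ : c ∈ Finset.univ) =>
    c.card_supp_le_card_edgeSet_toSimpleGraph_add_one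
  have hc := (Finset.sum_eq_sum_iff_of_le hle).mp (le_antisymm (Finset.sum_le_sum hle) h) c
    (Finset.mem_univ c)
  exact isTree_iff_connected_and_card.mpr ⟨c.connected_toSimpleGraph, hc.symm⟩

end SimpleGraph

section Sentence

variable {S : Type*}

lemma length_wordSteps (L : List S) : (wordSteps L).length = L.length - 1 := by
  simp [wordSteps]

lemma mem_of_mem_wordSteps {L : List S} {e : Sym2 S} (he : e ∈ wordSteps L) {x : S}
    (hx : x ∈ e) : x ∈ L := by
  rw [wordSteps, ← List.map_uncurry_zip_eq_zipWith, List.mem_map] at he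
  obtain ⟨⟨a, b⟩, hab, rfl⟩ := he
  rcases Sym2.mem_iff.mp hx with rfl | rfl
  · exact (List.of_mem_zip hab).1
  · exact List.mem_of_mem_tail (List.of_mem_zip hab).2

variable [DecidableEq S] {m : ℕ} {w : Fin m → List S}

lemma mem_sentenceSupp {i : Fin m} {x : S} (hx : x ∈ w i) : x ∈ sentenceSupp w :=
  Finset.mem_biUnion.mpr ⟨i, Finset.mem_univ i, List.mem_toFinset.mpr hx⟩

lemma sentenceGraph_adj {u v : {x : S // x ∈ sentenceSupp w}} :
    (sentenceGraph w).Adj u v ↔ u ≠ v ∧ ∃ i, s(u.1, v.1) ∈ wordSteps (w i) := by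
  simp only [sentenceGraph, SimpleGraph.fromRel_adj, Sym2.eq_swap (a := v.1), or_self]

def sentenceSteps (w : Fin m → List S) : Finset (Sym2 S) :=
  Finset.univ.biUnion fun i => (wordSteps (w i)).toFinset

lemma mem_sentenceSteps {e : Sym2 S} : e ∈ sentenceSteps w ↔ ∃ i, e ∈ wordSteps (w i) := by
  simp [sentenceSteps]

lemma sum_sum_count_sentenceSteps :
    ∑ e ∈ sentenceSteps w, ∑ i, (wordSteps (w i)).count e =
      ∑ i, (wordSteps (w i)).length := by
  rw [Finset.sum_comm]
  refine Finset.sum_congr rfl fun i _ => ?_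
  simpa using Multiset.sum_count_eq_card (m := (wordSteps (w i) : Multiset (Sym2 S)))
    fun e he => mem_sentenceSteps.mpr ⟨i, he⟩

lemma sum_length_eq_add_sum_sum_count (hne : ∀ i, w i ≠ []) :
    ∑ i, (w i).length = m + ∑ e ∈ sentenceSteps w, ∑ i, (wordSteps (w i)).count e := by
  calc ∑ i, (w i).length = ∑ i, ((wordSteps (w i)).length + 1) :=
        Finset.sum_congr rfl fun i _ => by
          have := List.length_pos_iff.mpr (hne i)
          rw [length_wordSteps]
          omega
    _ = _ := by
      rw [Finset.sum_add_distrib, sum_sum_count_sentenceSteps, add_comm]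
      simp

lemma card_edgeSet_sentenceGraph_le :
    Nat.card (sentenceGraph w).edgeSet ≤ #(sentenceSteps w) := by
  rw [← Nat.card_eq_finsetCard]
  refine Nat.card_le_card_of_injective
    (fun e => ⟨e.1.map Subtype.val, ?_⟩) fun e e' h => ?_
  · obtain ⟨e, he⟩ := e
    induction e using Sym2.ind with
    | _ u v => exact mem_sentenceSteps.mpr (sentenceGraph_adj.mp he).2
  · exact Subtype.ext (Sym2.map.injective Subtype.val_injective (congrArg Subtype.val h))

end Sentence

section WordComponent

variable {S : Type*} [DecidableEq S] {m : ℕ} {w : Fin m → List S}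

lemma connectedComponentMk_eq_head :
    ∀ (L : List S) (hL : L ≠ []) (_ : ∀ e ∈ wordSteps L, ∃ i, e ∈ wordSteps (w i))
      (hsupp : ∀ x ∈ L, x ∈ sentenceSupp w) (x : S) (hx : x ∈ L),
      (sentenceGraph w).connectedComponentMk ⟨x, hsupp x hx⟩ =
        (sentenceGraph w).connectedComponentMk ⟨L.head hL, hsupp _ (List.head_mem hL)⟩
  | [_], _, _, _, _, hx => by obtain rfl := List.mem_singleton.mp hx; rfl
  | a :: b :: l, _, hsteps, hsupp, x, hx => by
      have hba : (sentenceGraph w).connectedComponentMk ⟨b, hsupp b (by simp)⟩ =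
          (sentenceGraph w).connectedComponentMk ⟨a, hsupp a (by simp)⟩ := by
        by_cases hab : a = b
        · subst hab; rfl
        · refine (SimpleGraph.ConnectedComponent.sound (SimpleGraph.Adj.reachable ?_)).symm
          exact sentenceGraph_adj.mpr ⟨fun h => hab (congrArg Subtype.val h),
            hsteps _ List.mem_cons_self⟩
      rcases List.mem_cons.mp hx with rfl | hx
      · rfl
      · exact (connectedComponentMk_eq_head (b :: l) (List.cons_ne_nil _ _)
          (fun e he => hsteps e (List.mem_cons_of_mem _ he))
          (fun y hy => hsupp y (List.mem_cons_of_mem _ hy)) x hx).trans hba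

def wordComponent (hne : ∀ i, w i ≠ []) (i : Fin m) : (sentenceGraph w).ConnectedComponent :=
  (sentenceGraph w).connectedComponentMk
    ⟨(w i).head (hne i), mem_sentenceSupp (List.head_mem _)⟩

variable (hne : ∀ i, w i ≠ [])

lemma connectedComponentMk_eq_wordComponent {i : Fin m} {x : S} (hx : x ∈ w i) :
    (sentenceGraph w).connectedComponentMk ⟨x, mem_sentenceSupp hx⟩ = wordComponent hne i :=
  connectedComponentMk_eq_head (w i) (hne i) (fun _ he => ⟨i, he⟩) (fun _ => mem_sentenceSupp)
    x hx

lemma wordComponent_eq_of_mem_wordSteps {i j : Fin m} {e : Sym2 S} (hi : e ∈ wordSteps (w i))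
    (hj : e ∈ wordSteps (w j)) : wordComponent hne i = wordComponent hne j := by
  rw [← connectedComponentMk_eq_wordComponent hne (mem_of_mem_wordSteps hi e.out_fst_mem),
    ← connectedComponentMk_eq_wordComponent hne (mem_of_mem_wordSteps hj e.out_fst_mem)]

lemma wordComponent_surjective : Function.Surjective (wordComponent hne) := by
  intro c
  obtain ⟨⟨x, hx⟩, rfl⟩ := c.exists_rep
  obtain ⟨i, -, hxi⟩ := Finset.mem_biUnion.mp hx
  exact ⟨i, (connectedComponentMk_eq_wordComponent hne (List.mem_toFinset.mp hxi)).symm⟩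

lemma forall_mem_supp_iff_wordComponent_eq (k : Fin m) (c : (sentenceGraph w).ConnectedComponent) :
    (∀ v : {x : S // x ∈ sentenceSupp w}, (v : S) ∈ w k → v ∈ c.supp) ↔
      wordComponent hne k = c :=
  ⟨fun h => h _ (List.head_mem (hne k)), by
    rintro rfl v hv
    exact connectedComponentMk_eq_wordComponent hne hv⟩

section Fibers

variable [DecidableEq (sentenceGraph w).ConnectedComponent]

lemma two_le_card_filter_wordComponent_eq
    (hshare : ∀ i, ∃ j, j ≠ i ∧ ∃ e, e ∈ wordSteps (w i) ∧ e ∈ wordSteps (w j))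
    (c : (sentenceGraph w).ConnectedComponent) :
    2 ≤ #{i | wordComponent hne i = c} := by
  obtain ⟨i, rfl⟩ := wordComponent_surjective hne c
  obtain ⟨j, hji, e, hei, hej⟩ := hshare i
  exact Finset.one_lt_card.mpr ⟨i, by simp, j,
    by simp [wordComponent_eq_of_mem_wordSteps hne hej hei], hji.symm⟩

lemma card_filter_wordComponent_eq_two
    (hshare : ∀ i, ∃ j, j ≠ i ∧ ∃ e, e ∈ wordSteps (w i) ∧ e ∈ wordSteps (w j))
    (hm : m ≤ 2 * Nat.card (sentenceGraph w).ConnectedComponent)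
    (c : (sentenceGraph w).ConnectedComponent) :
    #{i | wordComponent hne i = c} = 2 := by
  have : Fintype (sentenceGraph w).ConnectedComponent := Fintype.ofFinite _
  refine Finset.card_filter_eq_of_card_le_mul_card (s := univ) (t := univ) (by simp)
    (fun c _ => two_le_card_filter_wordComponent_eq hne hshare c) ?_ c (mem_univ c)
  simpa [Nat.card_eq_fintype_card] using hm

lemma existsUnique_share_of_card_filter_wordComponent_eq_two
    (hshare : ∀ i, ∃ j, j ≠ i ∧ ∃ e, e ∈ wordSteps (w i) ∧ e ∈ wordSteps (w j))
    (hfib : ∀ c, #{i | wordComponent hne i = c} = 2) (i : Fin m) :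
    ∃! j, j ≠ i ∧ ∃ e, e ∈ wordSteps (w i) ∧ e ∈ wordSteps (w j) := by
  obtain ⟨j, hji, e, hei, hej⟩ := hshare i
  refine ⟨j, ⟨hji, e, hei, hej⟩, ?_⟩
  rintro j' ⟨hj'i, e', hei', hej'⟩
  obtain ⟨a, b, -, hab⟩ := Finset.card_eq_two.mp (hfib (wordComponent hne i))
  have hmem : ∀ k, wordComponent hne k = wordComponent hne i → k = a ∨ k = b := fun k hk => by
    have : k ∈ ({a, b} : Finset (Fin m)) := by rw [← hab]; simpa using hk
    simpa using this
  have := hmem i rfl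
  have := hmem j (wordComponent_eq_of_mem_wordSteps hne hej hei)
  have := hmem j' (wordComponent_eq_of_mem_wordSteps hne hej' hei')
  grind

lemma exists_pair_forall_mem_supp_iff_of_card_filter_wordComponent_eq_two
    (hfib : ∀ c, #{i | wordComponent hne i = c} = 2) (c : (sentenceGraph w).ConnectedComponent) :
    ∃ i j : Fin m, i ≠ j ∧ ∀ k : Fin m,
      ((∀ v : {x : S // x ∈ sentenceSupp w}, (v : S) ∈ w k → v ∈ c.supp) ↔
        (k = i ∨ k = j)) := by
  obtain ⟨i, j, hij, hc⟩ := Finset.card_eq_two.mp (hfib c)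
  refine ⟨i, j, hij, fun k => ?_⟩
  rw [forall_mem_supp_iff_wordComponent_eq hne]
  simpa using Finset.ext_iff.mp hc k

end Fibers

lemma two_mul_card_connectedComponent_le (hne : ∀ i, w i ≠ [])
    (hshare : ∀ i, ∃ j, j ≠ i ∧ ∃ e, e ∈ wordSteps (w i) ∧ e ∈ wordSteps (w j)) :
    2 * Nat.card (sentenceGraph w).ConnectedComponent ≤ m := by
  classical
  have : Fintype (sentenceGraph w).ConnectedComponent := Fintype.ofFinite _
  simpa [Nat.card_eq_fintype_card] using Finset.mul_card_image_le_card_of_maps_to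
    (s := univ) (t := univ) (by simp) 2 fun c _ => two_le_card_filter_wordComponent_eq hne hshare c

end WordComponent

/-- equality case of the CLT sentence lemma.  Let `a = [w_1,…,w_m]`
be a sentence in which no word is closed, every edge of `G_a` is traversed at least
twice, and every word shares an edge with some other word.  If
`wt(a) = ∑_i l(w_i)/2`, then: (a) every edge of `G_a` is traversed exactly twice;
(b) `m` is even and `G_a` has exactly `m/2` connected components, each a tree;
(c) each word shares an edge with a unique other word, and each connected component
of `G_a` contains the supports of exactly two of the words. -/
theorem sentence_weight_equality_case
    {S : Type*} [DecidableEq S] (m : ℕ) (w : Fin m → List S)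
    (hclosed : ∀ i, (w i).head? ≠ (w i).getLast?)
    (htwice : ∀ e : Sym2 S, (∃ i, e ∈ wordSteps (w i)) →
      2 ≤ ∑ i, (wordSteps (w i)).count e)
    (hshare : ∀ i, ∃ j, j ≠ i ∧ ∃ e, e ∈ wordSteps (w i) ∧ e ∈ wordSteps (w j))
    (heq : ((sentenceSupp w).card : ℝ) = ∑ i, ((w i).length : ℝ) / 2) :
    (∀ e : Sym2 S, (∃ i, e ∈ wordSteps (w i)) →
        (∑ i, (wordSteps (w i)).count e) = 2) ∧
    (Even m ∧ 2 * Nat.card (sentenceGraph w).ConnectedComponent = m ∧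
      ∀ c : (sentenceGraph w).ConnectedComponent,
        ((sentenceGraph w).induce c.supp).IsTree) ∧
    ((∀ i, ∃! j, j ≠ i ∧ ∃ e, e ∈ wordSteps (w i) ∧ e ∈ wordSteps (w j)) ∧
      ∀ c : (sentenceGraph w).ConnectedComponent,
        ∃ i j : Fin m, i ≠ j ∧ ∀ k : Fin m,
          ((∀ v : {x : S // x ∈ sentenceSupp w}, (v : S) ∈ w k → v ∈ c.supp)
            ↔ (k = i ∨ k = j))) := by
  classical
  have hne : ∀ i, w i ≠ [] := fun i h => hclosed i (by simp [h])
  have htwice' : ∀ e ∈ sentenceSteps w, 2 ≤ ∑ i, (wordSteps (w i)).count e :=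
    fun e he => htwice e (mem_sentenceSteps.mp he)
  have hweight : 2 * Nat.card (sentenceSupp w) = ∑ i, (w i).length := by
    rw [← Finset.sum_div, eq_div_iff two_ne_zero] at heq
    rw [Nat.card_eq_finsetCard, mul_comm]
    exact_mod_cast heq
  have hlength := sum_length_eq_add_sum_sum_count hne
  have hsteps : 2 * #(sentenceSteps w) ≤
      ∑ e ∈ sentenceSteps w, ∑ i, (wordSteps (w i)).count e := by
    simpa [mul_comm] using Finset.card_nsmul_le_sum _ _ 2 htwice'
  have hedges := card_edgeSet_sentenceGraph_le (w := w)
  have hforest := (sentenceGraph w).card_le_card_edgeSet_add_card_connectedComponent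
  have hcomp := two_mul_card_connectedComponent_le hne hshare
  have hcount := (Finset.sum_eq_sum_iff_of_le htwice').mp (by
    rw [Finset.sum_const, smul_eq_mul]
    omega)
  have hfib := card_filter_wordComponent_eq_two hne hshare (by omega)
  exact ⟨fun e he => (hcount e (mem_sentenceSteps.mpr he)).symm,
    ⟨⟨Nat.card (sentenceGraph w).ConnectedComponent, by omega⟩, by omega,
      (sentenceGraph w).isTree_toSimpleGraph_of_card_edgeSet_add_card_connectedComponent_le
        (by omega)⟩,
    existsUnique_share_of_card_filter_wordComponent_eq_two hne hshare hfib,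
    exists_pair_forall_mem_supp_iff_of_card_filter_wordComponent_eq_two hne hfib⟩
end
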